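/- For n ≥ 1 and 0 ≤ m ≤ n, the coefficient of q^m in the power series -q·F_{n-1}(q)/F_n(q) ∈ ℚ[[q]] equals (-1)^m C_{m-1} for m ≥ 1, and equals 0 for m = 0. -/

import Mathlib

open PowerSeries

noncomputable def qFibS : ℕ → PowerSeries ℚ
  | 0 => 1
  | 1 => 1
  | n + 2 => qFibS (n + 1) + PowerSeries.X * qFibS n

/-!
`H = -q C(-q) = ∑_{m ≥ 1} (-1)^m C_{m-1} q^m`, with `C` the Catalan series, is the root of
`H² = H + q` with `H(0) = 0`. That relation gives `F_{n+1} H + q F_n = H (F_n H + q F_{n-1})`, and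
`H + q = H²`, so `q^{n+1}` divides `F_n H + q F_{n-1}`: the series `-q F_{n-1} / F_n` agrees with `H`
up to order `n`.
-/

namespace PowerSeries

variable {R : Type*} [CommRing R]

variable (R) in
noncomputable def negXCatalanSeries : R⟦X⟧ :=
  -(X * rescale (-1) (map (Nat.castRingHom R) catalanSeries))

theorem coeff_succ_negXCatalanSeries (m : ℕ) :
    coeff (m + 1) (negXCatalanSeries R) = (-1) ^ (m + 1) * catalan m := by
  simp [negXCatalanSeries, coeff_succ_X_mul, coeff_rescale, pow_succ]

theorem X_dvd_negXCatalanSeries : X ∣ negXCatalanSeries R :=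
  ⟨_, (mul_neg _ _).symm⟩

theorem negXCatalanSeries_mul_self :
    negXCatalanSeries R * negXCatalanSeries R = negXCatalanSeries R + X := by
  have h := congrArg (fun f => rescale (-1 : R) (map (Nat.castRingHom R) f))
    catalanSeries_sq_mul_X_add_one
  simp only [map_add, map_mul, map_pow, map_X, map_one, rescale_neg_one_X] at h
  simp only [negXCatalanSeries]
  linear_combination (-X : R⟦X⟧) * h

theorem coeff_neg_X_mul_mul_inv_eq_of_X_pow_dvd {k : Type*} [Field k] {F G H : k⟦X⟧}
    (hF : constantCoeff F ≠ 0) {n : ℕ} (hdvd : X ^ (n + 1) ∣ F * H + X * G) {m : ℕ}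
    (hm : m ≤ n) : coeff m (-(X * G * F⁻¹)) = coeff m H := by
  have hsplit : -(X * G * F⁻¹) = H - (F * H + X * G) * F⁻¹ := by
    linear_combination H * PowerSeries.mul_inv_cancel F hF
  rw [hsplit, map_sub, X_pow_dvd_iff.mp (dvd_mul_of_dvd_left hdvd _) m (by omega), sub_zero]

end PowerSeries

theorem constantCoeff_qFibS : ∀ n, constantCoeff (qFibS n) = 1
  | 0 | 1 => by simp [qFibS]
  | n + 2 => by simp [qFibS, constantCoeff_qFibS n, constantCoeff_qFibS (n + 1)]

theorem X_pow_dvd_qFibS_mul_add {H : ℚ⟦X⟧} (hX : X ∣ H) (hH : H * H = H + X) :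
    ∀ n, X ^ (n + 2) ∣ qFibS (n + 1) * H + X * qFibS n
  | 0 => by simpa [qFibS, ← hH, sq] using mul_dvd_mul hX hX
  | n + 1 => by
    have hstep : qFibS (n + 2) * H + X * qFibS (n + 1) =
        H * (qFibS (n + 1) * H + X * qFibS n) := by
      rw [qFibS]
      linear_combination -(qFibS (n + 1)) * hH
    rw [hstep, pow_succ']
    exact mul_dvd_mul hX (X_pow_dvd_qFibS_mul_add hX hH n)

theorem coeff_neg_X_mul_ratio_general (n : ℕ) :
    PowerSeries.coeff (R := ℚ) 0 (-(PowerSeries.X * qFibS (n - 1) * (qFibS n)⁻¹)) = 0 ∧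
      ∀ m, 1 ≤ m → m ≤ n →
        PowerSeries.coeff (R := ℚ) m (-(PowerSeries.X * qFibS (n - 1) * (qFibS n)⁻¹)) =
          (-1) ^ m * catalan (m - 1) := by
  refine ⟨by simp [mul_assoc], fun m hm1 hmn => ?_⟩
  obtain ⟨k, rfl⟩ : ∃ k, n = k + 1 := ⟨n - 1, by omega⟩
  obtain ⟨j, rfl⟩ : ∃ j, m = j + 1 := ⟨m - 1, by omega⟩
  have hdvd := X_pow_dvd_qFibS_mul_add X_dvd_negXCatalanSeries negXCatalanSeries_mul_self k
  rw [Nat.add_sub_cancel, coeff_neg_X_mul_mul_inv_eq_of_X_pow_dvd (by simp [constantCoeff_qFibS])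
    hdvd hmn, coeff_succ_negXCatalanSeries, Nat.add_sub_cancel]

theorem coeff_neg_X_mul_ratio (n : ℕ) (hn : 1 ≤ n) :
    PowerSeries.coeff (R := ℚ) 0 (-(PowerSeries.X * qFibS (n - 1) * (qFibS n)⁻¹)) = 0 ∧
      ∀ m, 1 ≤ m → m ≤ n →
        PowerSeries.coeff (R := ℚ) m (-(PowerSeries.X * qFibS (n - 1) * (qFibS n)⁻¹)) =
          (-1) ^ m * catalan (m - 1) :=
  coeff_neg_X_mul_ratio_general n
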